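/- Fix an integer k ≥ 2. With Z_k(x) := ∑_{q (k+1)-free, q ≥ 1/x} φ(x,q)·f_k(q)², one has limsup_{x→0⁺} log(Z_k(x))/log(x) ≤ 2 − 1/k. -/

import Mathlib

open Finset Filter Asymptotics ArithmeticFunction Classical

/-- `q` is `k`-free: no `k`-th power of a prime divides `q`. -/
def KFree (k q : ℕ) : Prop := ∀ p : ℕ, p.Prime → ¬ p ^ k ∣ q

/-- The radical (squarefree kernel) of `q`. -/
def rad (q : ℕ) : ℕ := ∏ p ∈ q.primeFactors, p

/-- `f_k(q) = ∏_{p ∣ rad q} 1/(p^k - 1)`. -/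
noncomputable def fk (k q : ℕ) : ℝ := ∏ p ∈ q.primeFactors, 1 / ((p : ℝ) ^ k - 1)

/-- Two-parameter totient `φ(x,q) = #{1 ≤ m ≤ qx : gcd(m,q) = 1}`. -/
noncomputable def phi2 (x : ℝ) (q : ℕ) : ℕ :=
  ((Finset.Icc 1 ⌊(q : ℝ) * x⌋₊).filter fun m => Nat.gcd m q = 1).card


/-- `Z_k(x) = ∑_{q (k+1)-free, q ≥ 1/x} φ(x,q) f_k(q)²`. -/
noncomputable def Z (k : ℕ) (x : ℝ) : ℝ :=
  ∑' q : ℕ, if KFree (k + 1) q ∧ 1 / x ≤ (q : ℝ) then (phi2 x q : ℝ) * (fk k q) ^ 2 else 0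

/-!
Since `log x < 0`, it suffices to show `c * x ^ (2 - 1/k) ≤ Z k x ≤ 1` for small `x > 0`; the upper
bound only keeps the quotient bounded below, so that `limsup` is not a junk value.

Lower bound: with `t = x ^ (-1/k)`, the numbers `q = m ^ k` with `m` squarefree and
`t ≤ m ≤ 48 t` are `(k+1)`-free and satisfy `q ≥ 1/x`, `φ(x,q) ≥ 1` and `f_k(q) ≥ 1/m^k`. A positive
proportion of integers is squarefree (`∑ 1/p² < 1`), so there are at least `t` of them, and
`Z k x ≳ t * t ^ (-2k) = x ^ (2 - 1/k)`.

Upper bound: `φ(x,q) ≤ qx`, and a `(k+1)`-free `q` divides `∏_{p ∣ q} p ^ k`, so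
`q f_k(q)² ≤ ∏_{p ∣ q} 4/p^k`. The `(k+1)`-free `q < N` all divide `∏_{p < N} p ^ k`, and
summing the multiplicative function `∏_{p ∣ d} 4/p^k` over those divisors gives
`∏_{p<N} (1 + 4k/p^k) ≤ e^(4k)`.
Hence `Z k x ≤ e^(4k) x`; this also makes the series summable, without which `tsum` would be `0`.
-/

open Real Topology
open scoped ArithmeticFunction.zeta

lemma KFree.ne_zero {k q : ℕ} (h : KFree (k + 1) q) : q ≠ 0 := by
  rintro rfl
  exact h 2 Nat.prime_two (dvd_zero _)

lemma kFree_succ_iff_factorization_le {k q : ℕ} (hq : q ≠ 0) :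
    KFree (k + 1) q ↔ ∀ p, q.factorization p ≤ k := by
  refine ⟨fun h p => ?_, fun h p hp hdvd =>
    (h p).not_gt ((hp.pow_dvd_iff_le_factorization hq).1 hdvd)⟩
  by_cases hp : p.Prime
  · exact not_lt.1 fun hlt => h p hp ((hp.pow_dvd_iff_le_factorization hq).2 hlt)
  · simp [Nat.factorization_eq_zero_of_not_prime _ hp]

lemma KFree.dvd_prod_primeFactors_pow {k q : ℕ} (h : KFree (k + 1) q) :
    q ∣ ∏ p ∈ q.primeFactors, p ^ k := by
  conv_lhs => rw [← Nat.prod_factorization_pow_eq_self h.ne_zero,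
    Nat.prod_factorization_eq_prod_primeFactors]
  exact prod_dvd_prod_of_dvd _ _ fun p _ =>
    pow_dvd_pow p ((kFree_succ_iff_factorization_le h.ne_zero).1 h p)

lemma Squarefree.kFree_pow {m : ℕ} (hm : Squarefree m) (k : ℕ) : KFree (k + 1) (m ^ k) := by
  rw [kFree_succ_iff_factorization_le (pow_ne_zero _ hm.ne_zero)]
  intro p
  rw [Nat.factorization_pow, Finsupp.smul_apply, smul_eq_mul]
  exact mul_le_of_le_one_right (Nat.zero_le k) (hm.natFactorization_le_one p)

lemma sum_divisors_prod_pow_eq_prod {R : Type*} [CommSemiring R] (w : ℕ → R) {P : Finset ℕ}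
    (hP : ∀ p ∈ P, p.Prime) (k : ℕ) :
    ∑ d ∈ (∏ p ∈ P, p ^ k).divisors, ∏ p ∈ d.primeFactors, w p = ∏ p ∈ P, (1 + k * w p) := by
  have hmul : IsMultiplicative (prodPrimeFactors w * (ζ : ArithmeticFunction R)) :=
    (IsMultiplicative.prodPrimeFactors w).mul isMultiplicative_zeta.natCast
  calc ∑ d ∈ (∏ p ∈ P, p ^ k).divisors, ∏ p ∈ d.primeFactors, w p
      = (prodPrimeFactors w * (ζ : ArithmeticFunction R)) (∏ p ∈ P, p ^ k) := by
        rw [coe_mul_zeta_apply]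
        exact sum_congr rfl fun d hd =>
          (prodPrimeFactors_apply (Nat.pos_of_mem_divisors hd).ne').symm
    _ = ∏ p ∈ P, (prodPrimeFactors w * (ζ : ArithmeticFunction R)) (p ^ k) :=
        hmul.map_prod _ _ fun p hp q hq hpq => Nat.coprime_pow_primes _ _ (hP p hp) (hP q hq) hpq
    _ = ∏ p ∈ P, (1 + k * w p) := prod_congr rfl fun p hp => by
        have hpow (i : ℕ) : prodPrimeFactors w (p ^ (i + 1)) = w p := by
          rw [prodPrimeFactors_apply (pow_ne_zero _ (hP p hp).ne_zero),
            Nat.primeFactors_prime_pow i.succ_ne_zero (hP p hp), prod_singleton]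
        rw [coe_mul_zeta_apply, Nat.sum_divisors_prime_pow (hP p hp), sum_range_succ']
        simp [hpow, add_comm]

lemma sum_kFree_prod_primeFactors_le {w : ℕ → ℝ} (hw : ∀ p, 0 ≤ w p) (k N : ℕ) :
    ∑ q ∈ range N with KFree (k + 1) q, ∏ p ∈ q.primeFactors, w p
      ≤ ∏ p ∈ N.primesBelow, (1 + k * w p) := by
  rw [← sum_divisors_prod_pow_eq_prod w (fun p => Nat.prime_of_mem_primesBelow) k]
  refine sum_le_sum_of_subset_of_nonneg (fun q hq => ?_) fun q _ _ => prod_nonneg fun p _ => hw p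
  obtain ⟨hqN, hq⟩ := mem_filter.1 hq
  have hprimes : q.primeFactors ⊆ N.primesBelow := fun p hp =>
    Nat.mem_primesBelow.2 ⟨(Nat.le_of_mem_primeFactors hp).trans_lt (mem_range.1 hqN),
      Nat.prime_of_mem_primeFactors hp⟩
  refine Nat.mem_divisors.2
    ⟨hq.dvd_prod_primeFactors_pow.trans (prod_dvd_prod_of_subset _ _ _ hprimes), ?_⟩
  exact prod_ne_zero_iff.2 fun p hp => pow_ne_zero _ (Nat.prime_of_mem_primesBelow hp).ne_zero

lemma prod_one_add_le_exp_sum {ι : Type*} {s : Finset ι} {f : ι → ℝ} (hf : ∀ i ∈ s, 0 ≤ f i) :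
    ∏ i ∈ s, (1 + f i) ≤ exp (∑ i ∈ s, f i) := by
  rw [exp_sum]
  exact prod_le_prod (fun i hi => by linarith [hf i hi]) fun i _ => by
    linarith [add_one_le_exp (f i)]

lemma sum_primesBelow_inv_pow_le {k : ℕ} (hk : 2 ≤ k) (N : ℕ) :
    ∑ p ∈ N.primesBelow, ((p : ℝ) ^ k)⁻¹ ≤ 1 := by
  calc ∑ p ∈ N.primesBelow, ((p : ℝ) ^ k)⁻¹
      ≤ ∑ p ∈ N.primesBelow, ((p : ℝ) ^ 2)⁻¹ := by
        gcongr with p hp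
        · exact pow_pos (by exact_mod_cast (Nat.prime_of_mem_primesBelow hp).pos) 2
        · exact_mod_cast (Nat.prime_of_mem_primesBelow hp).one_le
    _ ≤ ∑ n ∈ Ioo 1 N, ((n : ℝ) ^ 2)⁻¹ :=
        sum_le_sum_of_subset_of_nonneg (fun p hp => mem_Ioo.2
          ⟨Nat.one_lt_of_mem_primesBelow hp, Nat.lt_of_mem_primesBelow hp⟩)
          fun _ _ _ => by positivity
    _ ≤ 1 := by simpa [one_add_one_eq_two] using sum_Ioo_inv_sq_le (α := ℝ) 1 N

lemma two_le_cast_prime_pow {p k : ℕ} (hp : p.Prime) (hk : k ≠ 0) : (2 : ℝ) ≤ (p : ℝ) ^ k :=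
  (by exact_mod_cast hp.two_le : (2 : ℝ) ≤ p).trans
    (le_self_pow₀ (by exact_mod_cast hp.one_le) hk)

lemma cast_mul_fk_sq_le {k q : ℕ} (hk : k ≠ 0) (h : KFree (k + 1) q) :
    (q : ℝ) * fk k q ^ 2 ≤ ∏ p ∈ q.primeFactors, 4 / (p : ℝ) ^ k := by
  have hq : (q : ℝ) ≤ ∏ p ∈ q.primeFactors, (p : ℝ) ^ k := by
    exact_mod_cast Nat.le_of_dvd (prod_pos fun p hp => pow_pos (Nat.pos_of_mem_primeFactors hp) k)
      h.dvd_prod_primeFactors_pow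
  have hfk : fk k q ^ 2 ≤ ∏ p ∈ q.primeFactors, (2 / (p : ℝ) ^ k) ^ 2 := by
    rw [fk, ← prod_pow]
    refine prod_le_prod (fun p _ => sq_nonneg _) fun p hp => ?_
    have h2 := two_le_cast_prime_pow (Nat.prime_of_mem_primeFactors hp) hk
    refine pow_le_pow_left₀ (one_div_nonneg.2 (by linarith)) ?_ 2
    rw [div_le_div_iff₀ (by linarith) (by linarith)]
    linarith
  calc (q : ℝ) * fk k q ^ 2
      ≤ (∏ p ∈ q.primeFactors, (p : ℝ) ^ k) * ∏ p ∈ q.primeFactors, (2 / (p : ℝ) ^ k) ^ 2 := by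
        gcongr
    _ = ∏ p ∈ q.primeFactors, 4 / (p : ℝ) ^ k := by
        rw [← prod_mul_distrib]
        refine prod_congr rfl fun p hp => ?_
        have : (p : ℝ) ≠ 0 := by exact_mod_cast (Nat.pos_of_mem_primeFactors hp).ne'
        field_simp
        ring

lemma sum_kFree_cast_mul_fk_sq_le {k : ℕ} (hk : 2 ≤ k) (N : ℕ) :
    ∑ q ∈ range N with KFree (k + 1) q, (q : ℝ) * fk k q ^ 2 ≤ exp (4 * k) := by
  calc ∑ q ∈ range N with KFree (k + 1) q, (q : ℝ) * fk k q ^ 2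
      ≤ ∑ q ∈ range N with KFree (k + 1) q, ∏ p ∈ q.primeFactors, 4 / (p : ℝ) ^ k :=
        sum_le_sum fun q hq => cast_mul_fk_sq_le (by omega) (mem_filter.1 hq).2
    _ ≤ ∏ p ∈ N.primesBelow, (1 + k * (4 / (p : ℝ) ^ k)) :=
        sum_kFree_prod_primeFactors_le (fun p => by positivity) k N
    _ ≤ exp (∑ p ∈ N.primesBelow, k * (4 / (p : ℝ) ^ k)) :=
        prod_one_add_le_exp_sum fun p _ => by positivity
    _ = exp (4 * k * ∑ p ∈ N.primesBelow, ((p : ℝ) ^ k)⁻¹) := by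
        rw [mul_sum]
        congr 1
        exact sum_congr rfl fun p _ => by ring
    _ ≤ exp (4 * k) :=
        exp_le_exp.2 (mul_le_of_le_one_right (by positivity) (sum_primesBelow_inv_pow_le hk N))

lemma phi2_le {x : ℝ} (hx : 0 ≤ x) (q : ℕ) : (phi2 x q : ℝ) ≤ q * x :=
  calc (phi2 x q : ℝ) ≤ ⌊(q : ℝ) * x⌋₊ := by
        exact_mod_cast (card_filter_le _ _).trans (Nat.card_Icc 1 _).le
    _ ≤ q * x := Nat.floor_le (by positivity)

lemma one_le_phi2 {x : ℝ} {q : ℕ} (h : 1 ≤ (q : ℝ) * x) : 1 ≤ phi2 x q :=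
  card_pos.2 ⟨1, mem_filter.2 ⟨mem_Icc.2 ⟨le_rfl, Nat.le_floor (by exact_mod_cast h)⟩,
    Nat.gcd_one_left q⟩⟩

noncomputable def zSummand (k : ℕ) (x : ℝ) (q : ℕ) : ℝ :=
  if KFree (k + 1) q ∧ 1 / x ≤ (q : ℝ) then (phi2 x q : ℝ) * fk k q ^ 2 else 0

lemma Z_eq_tsum_zSummand (k : ℕ) (x : ℝ) : Z k x = ∑' q, zSummand k x q := rfl

lemma zSummand_nonneg (k : ℕ) (x : ℝ) (q : ℕ) : 0 ≤ zSummand k x q := by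
  unfold zSummand
  split_ifs <;> positivity

lemma sum_range_zSummand_le {k : ℕ} (hk : 2 ≤ k) {x : ℝ} (hx : 0 ≤ x) (N : ℕ) :
    ∑ q ∈ range N, zSummand k x q ≤ x * exp (4 * k) := by
  calc ∑ q ∈ range N, zSummand k x q
      ≤ ∑ q ∈ range N with KFree (k + 1) q, x * ((q : ℝ) * fk k q ^ 2) := by
        rw [sum_filter]
        gcongr with q
        unfold zSummand
        split_ifs with h h'
        · exact (mul_le_mul_of_nonneg_right (phi2_le hx q) (sq_nonneg _)).trans_eq (by ring)
        · exact absurd h.1 h'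
        · positivity
        · rfl
    _ ≤ x * exp (4 * k) := by
        rw [← mul_sum]
        exact mul_le_mul_of_nonneg_left (sum_kFree_cast_mul_fk_sq_le hk N) hx

lemma summable_zSummand {k : ℕ} (hk : 2 ≤ k) {x : ℝ} (hx : 0 ≤ x) : Summable (zSummand k x) :=
  summable_of_sum_range_le (zSummand_nonneg k x) (sum_range_zSummand_le hk hx)

lemma Z_le {k : ℕ} (hk : 2 ≤ k) {x : ℝ} (hx : 0 ≤ x) : Z k x ≤ x * exp (4 * k) := by
  rw [Z_eq_tsum_zSummand]
  exact Real.tsum_le_of_sum_range_le (zSummand_nonneg k x) (sum_range_zSummand_le hk hx)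

lemma inv_pow_le_fk_pow {k m : ℕ} (hk : k ≠ 0) (hm : m ≠ 0) : ((m : ℝ) ^ k)⁻¹ ≤ fk k (m ^ k) := by
  have hrad : (∏ p ∈ m.primeFactors, (p : ℝ)) ≤ m := by
    rw [← Nat.cast_prod]
    exact_mod_cast Nat.le_of_dvd (Nat.pos_of_ne_zero hm) (Nat.prod_primeFactors_dvd m)
  calc ((m : ℝ) ^ k)⁻¹ ≤ ((∏ p ∈ m.primeFactors, (p : ℝ)) ^ k)⁻¹ := by
        gcongr
        exact pow_pos (prod_pos fun p hp => Nat.cast_pos.2 (Nat.pos_of_mem_primeFactors hp)) k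
    _ = ∏ p ∈ m.primeFactors, 1 / (p : ℝ) ^ k := by
        rw [← prod_pow, ← prod_inv_distrib]
        simp only [one_div]
    _ ≤ fk k (m ^ k) := by
        rw [fk, Nat.primeFactors_pow m hk]
        refine prod_le_prod (fun _ _ => by positivity) fun p hp => ?_
        have h2 := two_le_cast_prime_pow (Nat.prime_of_mem_primeFactors hp) hk
        exact one_div_le_one_div_of_le (by linarith) (by linarith)

lemma inv_sq_pow_le_zSummand {k m : ℕ} (hk : k ≠ 0) (hm : Squarefree m) {x : ℝ} (hx : 0 < x)
    (hmx : 1 / x ≤ (m : ℝ) ^ k) : ((m : ℝ) ^ k)⁻¹ ^ 2 ≤ zSummand k x (m ^ k) := by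
  have hmx' : 1 / x ≤ ((m ^ k : ℕ) : ℝ) := by exact_mod_cast hmx
  have hphi : (1 : ℝ) ≤ phi2 x (m ^ k) := by
    exact_mod_cast one_le_phi2 (by rwa [div_le_iff₀ hx] at hmx')
  rw [zSummand, if_pos ⟨hm.kFree_pow k, hmx'⟩]
  calc ((m : ℝ) ^ k)⁻¹ ^ 2 ≤ fk k (m ^ k) ^ 2 :=
        pow_le_pow_left₀ (by positivity) (inv_pow_le_fk_pow hk hm.ne_zero) 2
    _ ≤ phi2 x (m ^ k) * fk k (m ^ k) ^ 2 := le_mul_of_one_le_left (sq_nonneg _) hphi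

lemma sum_inv_sq_insert_two_Ioo_le (n : ℕ) :
    ∑ d ∈ insert 2 (Ioo 2 n), ((d : ℝ) ^ 2)⁻¹ ≤ 11 / 12 := by
  rw [sum_insert (by simp)]
  have := sum_Ioo_inv_sq_le (α := ℝ) 2 n
  norm_num at this ⊢
  linarith

lemma card_not_squarefree_Ioc_le (M N : ℕ) :
    (#{m ∈ Ioc M N | ¬Squarefree m} : ℝ) ≤ 11 / 12 * N := by
  have hsub : {m ∈ Ioc M N | ¬Squarefree m} ⊆
      (insert 2 (Ioo 2 (N + 1))).biUnion fun d => {m ∈ Ioc 0 N | d ^ 2 ∣ m} := by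
    intro m hm
    obtain ⟨hmI, hsq⟩ := mem_filter.1 hm
    obtain ⟨hMm, hmN⟩ := mem_Ioc.1 hmI
    obtain ⟨p, hp, hpm⟩ : ∃ p, p.Prime ∧ p * p ∣ m := by
      simpa [Nat.squarefree_iff_prime_squarefree] using hsq
    have hpN : p ≤ N := (Nat.le_of_dvd (by omega) (Dvd.intro _ rfl |>.trans hpm)).trans hmN
    refine mem_biUnion.2 ⟨p, ?_, mem_filter.2 ⟨mem_Ioc.2 ⟨by omega, hmN⟩, by rwa [sq]⟩⟩
    rcases hp.two_le.eq_or_lt with h | h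
    · exact h ▸ mem_insert_self _ _
    · exact mem_insert_of_mem (mem_Ioo.2 ⟨h, by omega⟩)
  calc (#{m ∈ Ioc M N | ¬Squarefree m} : ℝ)
      ≤ ∑ d ∈ insert 2 (Ioo 2 (N + 1)), (#{m ∈ Ioc 0 N | d ^ 2 ∣ m} : ℝ) := by
        exact_mod_cast (card_le_card hsub).trans card_biUnion_le
    _ ≤ ∑ d ∈ insert 2 (Ioo 2 (N + 1)), (N : ℝ) * ((d : ℝ) ^ 2)⁻¹ := by
        gcongr with d
        rw [Nat.Ioc_filter_dvd_card_eq_div, ← div_eq_mul_inv]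
        exact_mod_cast Nat.cast_div_le
    _ ≤ 11 / 12 * N := by
        rw [← mul_sum, mul_comm]
        exact mul_le_mul_of_nonneg_right (sum_inv_sq_insert_two_Ioo_le _) (Nat.cast_nonneg N)

lemma card_squarefree_Ioc_ge (M N : ℕ) : (N : ℝ) / 12 - M ≤ #{m ∈ Ioc M N | Squarefree m} := by
  have hsplit : N ≤ #{m ∈ Ioc M N | Squarefree m} + #{m ∈ Ioc M N | ¬Squarefree m} + M := by
    rw [card_filter_add_card_filter_not, Nat.card_Ioc]
    omega
  have hsplit' : (N : ℝ) ≤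
      #{m ∈ Ioc M N | Squarefree m} + #{m ∈ Ioc M N | ¬Squarefree m} + M := by
    exact_mod_cast hsplit
  linarith [card_not_squarefree_Ioc_le M N]

lemma Z_ge_of_inv_le_pow {k : ℕ} (hk : 2 ≤ k) {x : ℝ} (hx : 0 < x) {M : ℕ}
    (hM : 1 / x ≤ (M : ℝ) ^ k) : M * ((24 * M : ℝ) ^ k)⁻¹ ^ 2 ≤ Z k x := by
  set S := {m ∈ Ioc M (24 * M) | Squarefree m}
  have hS : (M : ℝ) ≤ #S := by
    have := card_squarefree_Ioc_ge M (24 * M)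
    push_cast at this
    linarith
  have hterm : ∀ m ∈ S, ((24 * M : ℝ) ^ k)⁻¹ ^ 2 ≤ zSummand k x (m ^ k) := fun m hm => by
    obtain ⟨hmI, hsq⟩ := mem_filter.1 hm
    obtain ⟨hMm, hmM⟩ := mem_Ioc.1 hmI
    have hm0 : (0 : ℝ) < m := by exact_mod_cast hsq.ne_zero.bot_lt
    have hMm' : (M : ℝ) ≤ m := by exact_mod_cast hMm.le
    have hmM' : (m : ℝ) ≤ 24 * M := by exact_mod_cast hmM
    refine le_trans ?_ (inv_sq_pow_le_zSummand (by omega) hsq hx (hM.trans (by gcongr)))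
    gcongr
  calc M * ((24 * M : ℝ) ^ k)⁻¹ ^ 2 ≤ #S * ((24 * M : ℝ) ^ k)⁻¹ ^ 2 := by gcongr
    _ = ∑ m ∈ S, ((24 * M : ℝ) ^ k)⁻¹ ^ 2 := by rw [sum_const, nsmul_eq_mul]
    _ ≤ ∑ m ∈ S, zSummand k x (m ^ k) := sum_le_sum hterm
    _ = ∑ q ∈ S.image (· ^ k), zSummand k x q :=
        (sum_image fun a _ b _ h => Nat.pow_left_injective (by omega) h).symm
    _ ≤ Z k x := by
        rw [Z_eq_tsum_zSummand]
        exact (summable_zSummand hk hx.le).sum_le_tsum _ fun q _ => zSummand_nonneg k x q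

lemma Z_ge_rpow {k : ℕ} (hk : 2 ≤ k) {x : ℝ} (hx0 : 0 < x) (hx1 : x ≤ 1) :
    ((48 : ℝ) ^ (2 * k))⁻¹ * x ^ (2 - 1 / (k : ℝ)) ≤ Z k x := by
  have hk0 : (k : ℝ) ≠ 0 := by positivity
  set t := x ^ (-(1 / (k : ℝ)))
  have ht1 : 1 ≤ t := one_le_rpow_of_pos_of_le_one_of_nonpos hx0 hx1 (by simp)
  have htk : t ^ k = 1 / x := by
    rw [← rpow_natCast, ← rpow_mul hx0.le, neg_mul, one_div_mul_cancel hk0, rpow_neg_one,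
      one_div]
  set M := ⌈t⌉₊
  have htM : t ≤ M := Nat.le_ceil t
  have hMt : (M : ℝ) ≤ 2 * t := by linarith [Nat.ceil_lt_add_one (zero_le_one.trans ht1)]
  have hM : 1 / x ≤ (M : ℝ) ^ k := htk ▸ by gcongr
  calc ((48 : ℝ) ^ (2 * k))⁻¹ * x ^ (2 - 1 / (k : ℝ)) = t * ((48 * t) ^ k)⁻¹ ^ 2 := by
        rw [sub_eq_neg_add, rpow_add hx0, rpow_two, mul_pow, htk, pow_mul']
        field_simp
        rfl
    _ ≤ M * ((24 * M : ℝ) ^ k)⁻¹ ^ 2 := by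
        gcongr ?_ * (?_ ^ k)⁻¹ ^ 2
        linarith
    _ ≤ Z k x := Z_ge_of_inv_le_pow hk hx0 hM

lemma limsup_log_div_log_le {f : ℝ → ℝ} {a c : ℝ} (hc : 0 < c)
    (hlow : ∀ᶠ x in 𝓝[>] (0 : ℝ), c * x ^ a ≤ f x) (hup : ∀ᶠ x in 𝓝[>] 0, f x ≤ 1) :
    limsup (fun x => Real.log (f x) / Real.log x) (𝓝[>] 0) ≤ a := by
  have hbounds : ∀ᶠ x in 𝓝[>] (0 : ℝ),
      0 ≤ Real.log (f x) / Real.log x ∧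
        Real.log (f x) / Real.log x ≤ a + Real.log c / Real.log x := by
    filter_upwards [Ioo_mem_nhdsGT one_pos, hlow, hup] with x ⟨hx0, hx1⟩ hlo hhi
    have hlogx : Real.log x < 0 := log_neg hx0 hx1
    have hfx : 0 < f x := (by positivity : 0 < c * x ^ a).trans_le hlo
    have hlog : Real.log c + a * Real.log x ≤ Real.log (f x) := by
      rw [← log_rpow hx0, ← log_mul hc.ne' (by positivity)]
      exact log_le_log (by positivity) hlo
    refine ⟨div_nonneg_of_nonpos (log_nonpos hfx.le hhi) hlogx.le, ?_⟩
    rw [div_le_iff_of_neg hlogx, add_mul, div_mul_cancel₀ _ hlogx.ne]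
    linarith
  have htend : Tendsto (fun x => a + Real.log c / Real.log x) (𝓝[>] 0) (𝓝 a) := by
    simpa using tendsto_const_nhds.add (tendsto_const_nhds.div_atBot tendsto_log_nhdsGT_zero)
  calc limsup (fun x => Real.log (f x) / Real.log x) (𝓝[>] 0)
      ≤ limsup (fun x => a + Real.log c / Real.log x) (𝓝[>] 0) :=
        limsup_le_limsup (hbounds.mono fun _ h => h.2)
          (isCoboundedUnder_le_of_eventually_le _ (hbounds.mono fun _ h => h.1))
          htend.isBoundedUnder_le
    _ = a := htend.limsup_eq

theorem stmt16 (k : ℕ) (hk : 2 ≤ k) :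
    Filter.limsup (fun x : ℝ => Real.log (Z k x) / Real.log x) (nhdsWithin 0 (Set.Ioi 0))
      ≤ 2 - 1 / (k : ℝ) := by
  refine limsup_log_div_log_le (c := ((48 : ℝ) ^ (2 * k))⁻¹) (by positivity) ?_ ?_
  · filter_upwards [Ioc_mem_nhdsGT one_pos] with x ⟨hx0, hx1⟩ using Z_ge_rpow hk hx0 hx1
  · filter_upwards [Ioo_mem_nhdsGT (inv_pos.2 (exp_pos (4 * k)))] with x ⟨hx0, hx⟩
    calc Z k x ≤ x * exp (4 * k) := Z_le hk hx0.le
      _ ≤ (exp (4 * k))⁻¹ * exp (4 * k) := by gcongr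
      _ = 1 := inv_mul_cancel₀ (exp_pos _).ne'
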